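/- In the model M2, for every formula φ of the language Φ (with single propositional variable p and single name Ann), if the truth set [φ] belongs to the family {[p], [⊥], [¬p], [⊤]}, then both truth sets [D_Ann φ] and [@_Ann φ] belong to the family {[p], [⊥], [¬p], [⊤]}. -/

import Mathlib

/-- Formulas of the language Φ: φ ::= p | ¬φ | φ∨φ | @ₙφ | Rₙφ | Dₙφ,
where `P` is the type of propositional variables and `N` the type of names. -/
inductive Formula (P N : Type) : Type
  | var : P → Formula P N
  | neg : Formula P N → Formula P N
  | disj : Formula P N → Formula P N → Formula P N
  | at_ : N → Formula P N → Formula P N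
  | re : N → Formula P N → Formula P N
  | de : N → Formula P N → Formula P N

/-- An epistemic model with extensions. -/
structure Model (P N : Type) where
  W : Type
  A : Type
  sim : A → W → W → Prop
  sim_equiv : ∀ a, Equivalence (sim a)
  ext : W → N → A
  val : P → Set (W × A)

/-- The satisfaction relation `w, a ⊨ φ`. -/
def Model.sat {P N : Type} (M : Model P N) : Formula P N → M.W → M.A → Prop
  | .var p, w, a => (w, a) ∈ M.val p
  | .neg φ, w, a => ¬ M.sat φ w a
  | .disj φ ψ, w, a => M.sat φ w a ∨ M.sat ψ w a
  | .at_ n φ, w, _ => M.sat φ w (M.ext w n)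
  | .re n φ, w, a => ∀ u, M.sim a w u → M.sat φ u (M.ext w n)
  | .de n φ, w, a => ∀ u, M.sim a w u → M.sat φ u (M.ext u n)

/-- The truth set ⟦φ⟧ of a formula. -/
def Model.truthSet {P N : Type} (M : Model P N) (φ : Formula P N) : Set (M.W × M.A) :=
  {x | M.sat φ x.1 x.2}

/-- The model M2: worlds w=0, u=1; agents a=0, b=1; agent a cannot
distinguish the worlds, agent b can; Ann refers to a in w and b in u;
π(p) = {(w,a),(u,b)}. -/
def M2 : Model Unit Unit where
  W := Fin 2
  A := Fin 2
  sim := fun x s t => x = 0 ∨ s = t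
  sim_equiv := fun x =>
    ⟨fun _ => Or.inr rfl, fun h => h.imp id Eq.symm,
     fun h₁ h₂ => by rcases h₁ with h | h <;> rcases h₂ with h' | h' <;> simp_all⟩
  ext := fun w _ => w
  val := fun _ => {((0 : Fin 2), (0 : Fin 2)), (1, 1)}

/-- The family of truth sets {⟦p⟧, ⟦⊥⟧, ⟦¬p⟧, ⟦⊤⟧} in M2 (⟦⊥⟧ = ∅, ⟦⊤⟧ = W×A). -/
def Fam2 : Set (Set (M2.W × M2.A)) :=
  {M2.truthSet (.var ()), ∅, M2.truthSet (.neg (.var ())), Set.univ}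

/-! Both `@_Ann φ` and `D_Ann φ` only read `φ` at the pairs `(w, e_w(Ann))`, and in `M2` these are
the diagonal pairs `(w, a)` and `(u, b)`. Each of `⟦p⟧, ⟦⊥⟧, ⟦¬p⟧, ⟦⊤⟧` either contains both of
them or neither, so `⟦@_Ann φ⟧` and `⟦D_Ann φ⟧` are both `⟦⊤⟧` or both `⟦⊥⟧`. -/

namespace Model

variable {P N : Type} {M : Model P N} {n : N} {φ : Formula P N}

theorem truthSet_at_eq_univ (h : ∀ w, M.sat φ w (M.ext w n)) :
    M.truthSet (.at_ n φ) = Set.univ :=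
  Set.eq_univ_of_forall fun x => h x.1

theorem truthSet_at_eq_empty (h : ∀ w, ¬ M.sat φ w (M.ext w n)) :
    M.truthSet (.at_ n φ) = ∅ :=
  Set.eq_empty_of_forall_notMem fun x => h x.1

theorem truthSet_de_eq_univ (h : ∀ w, M.sat φ w (M.ext w n)) :
    M.truthSet (.de n φ) = Set.univ :=
  Set.eq_univ_of_forall fun _ u _ => h u

theorem truthSet_de_eq_empty (h : ∀ w, ¬ M.sat φ w (M.ext w n)) :
    M.truthSet (.de n φ) = ∅ :=
  Set.eq_empty_of_forall_notMem fun x hx => h x.1 (hx x.1 ((M.sim_equiv x.2).refl x.1))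

end Model

theorem M2_sat_var_ext : ∀ w : M2.W, M2.sat (.var ()) w (M2.ext w ())
  | (0 : Fin 2) => .inl rfl
  | (1 : Fin 2) => .inr rfl

theorem M2_sat_ext_or_not_sat_ext {φ : Formula Unit Unit} (h : M2.truthSet φ ∈ Fam2) :
    (∀ w, M2.sat φ w (M2.ext w ())) ∨ (∀ w, ¬ M2.sat φ w (M2.ext w ())) := by
  have mem_iff : ∀ w, M2.sat φ w (M2.ext w ()) ↔ (w, M2.ext w ()) ∈ M2.truthSet φ :=
    fun _ => Iff.rfl
  simp only [mem_iff]
  rcases h with h | h | h | h <;> rw [h]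
  · exact .inl M2_sat_var_ext
  · exact .inr fun _ => Set.notMem_empty _
  · exact .inr fun w hw => hw (M2_sat_var_ext w)
  · exact .inl fun _ => Set.mem_univ _

/-- In M2, if ⟦φ⟧ ∈ {⟦p⟧, ⟦⊥⟧, ⟦¬p⟧, ⟦⊤⟧}, then both
⟦D_Ann φ⟧ and ⟦@_Ann φ⟧ belong to {⟦p⟧, ⟦⊥⟧, ⟦¬p⟧, ⟦⊤⟧}. -/
theorem de_at_closed_in_M2 (φ : Formula Unit Unit) (h : M2.truthSet φ ∈ Fam2) :
    M2.truthSet (.de () φ) ∈ Fam2 ∧ M2.truthSet (.at_ () φ) ∈ Fam2 := by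
  rcases M2_sat_ext_or_not_sat_ext h with hφ | hφ
  · rw [Model.truthSet_de_eq_univ hφ, Model.truthSet_at_eq_univ hφ]
    simp [Fam2]
  · rw [Model.truthSet_de_eq_empty hφ, Model.truthSet_at_eq_empty hφ]
    simp [Fam2]
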